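/- arXiv:1601.07780 — 2 statements merged into one kernel-verified Lean document; each statement's English description precedes it below -/
import Mathlib

section
/- The function A(h_U, h_Z) = c₁/(h_U h_Z) + c₂(a h_U⁴ + 2b h_U² h_Z² + d h_Z⁴) over h_U, h_Z > 0, with c₁, c₂, a, d > 0 and b > −√(ad), is minimized at h_U* = (c₁ d^{3/4} / (4 c₂ (√(ad) + b) a^{3/4}))^{1/6} and h_Z* = (a/d)^{1/4} h_U*, and in particular the minimizer satisfies h_Z*/h_U* = (a/d)^{1/4}. -/
/-! Writing s = √(ad) + b > 0, the quartic part splits as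
a x⁴ + 2b x²y² + d y⁴ = (√a x² − √d y²)² + 2s (xy)², so A(x, y) ≥ c₁/t + 2c₂s t² with t = xy,
with equality on the curve √a x² = √d y², i.e. y = (a/d)^{1/4} x. The one-variable function
c₁/t + 2c₂s t² is minimised where c₁ = 4c₂s t³ (AM-GM for c₁/2t, c₁/2t, 2c₂s t²), and the
closed form of h_U* is exactly the point of the curve where this holds. -/

open Real

theorem quartic_eq_sq_add_mul_sq {a d : ℝ} (ha : 0 ≤ a) (hd : 0 ≤ d) (b x y : ℝ) :
    a * x ^ 4 + 2 * b * x ^ 2 * y ^ 2 + d * y ^ 4 =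
      (√a * x ^ 2 - √d * y ^ 2) ^ 2 + 2 * (√(a * d) + b) * (x * y) ^ 2 := by
  rw [sqrt_mul ha]
  linear_combination -(x ^ 4) * sq_sqrt ha - y ^ 4 * sq_sqrt hd

theorem three_mul_sq_le_two_mul_pow_three_div_add_sq {T t : ℝ} (hT : 0 ≤ T) (ht : 0 < t) :
    3 * T ^ 2 ≤ 2 * T ^ 3 / t + t ^ 2 := by
  have hdiff : 2 * T ^ 3 / t + t ^ 2 - 3 * T ^ 2 = (t - T) ^ 2 * (t + 2 * T) / t := by
    field_simp
    ring
  have hnonneg : 0 ≤ (t - T) ^ 2 * (t + 2 * T) / t := by positivity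
  linarith

theorem amise_le_of_balanced {c₁ c₂ a b d u z x y : ℝ} (hc₂ : 0 ≤ c₂) (ha : 0 ≤ a) (hd : 0 ≤ d)
    (hs : 0 ≤ √(a * d) + b) (hu : 0 < u) (hz : 0 < z) (hx : 0 < x) (hy : 0 < y)
    (hbalanced : √a * u ^ 2 = √d * z ^ 2) (hc₁ : c₁ = 4 * c₂ * (√(a * d) + b) * (u * z) ^ 3) :
    c₁ / (u * z) + c₂ * (a * u ^ 4 + 2 * b * u ^ 2 * z ^ 2 + d * z ^ 4) ≤
      c₁ / (x * y) + c₂ * (a * x ^ 4 + 2 * b * x ^ 2 * y ^ 2 + d * y ^ 4) := by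
  rw [quartic_eq_sq_add_mul_sq ha hd, quartic_eq_sq_add_mul_sq ha hd, hbalanced, sub_self, hc₁]
  set s := √(a * d) + b
  have huz : 0 < u * z := mul_pos hu hz
  have hamgm := three_mul_sq_le_two_mul_pow_three_div_add_sq huz.le (mul_pos hx hy)
  have hmin : 4 * c₂ * s * (u * z) ^ 3 / (u * z) = 4 * c₂ * s * (u * z) ^ 2 := by
    field_simp
  have hsplit : 4 * c₂ * s * (u * z) ^ 3 / (x * y) = 2 * c₂ * s * (2 * (u * z) ^ 3 / (x * y)) := by
    ring
  rw [hmin, hsplit]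
  nlinarith [mul_le_mul_of_nonneg_left hamgm (by positivity : 0 ≤ 2 * c₂ * s),
    mul_nonneg hc₂ (sq_nonneg (√a * x ^ 2 - √d * y ^ 2))]

theorem sqrt_mul_rpow_one_div_four_sq {a d : ℝ} (ha : 0 ≤ a) (hd : 0 < d) :
    √d * ((a / d) ^ ((1 : ℝ) / 4)) ^ 2 = √a := by
  have hq2 : ((a / d) ^ ((1 : ℝ) / 4)) ^ 2 = √(a / d) := by
    rw [← rpow_natCast, ← rpow_mul (by positivity), sqrt_eq_rpow]
    norm_num
  rw [hq2, ← sqrt_mul hd.le, mul_div_cancel₀ a hd.ne']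

theorem rpow_one_div_four_pow_three {x : ℝ} (hx : 0 ≤ x) :
    (x ^ ((1 : ℝ) / 4)) ^ 3 = x ^ ((3 : ℝ) / 4) := by
  rw [← rpow_natCast, ← rpow_mul hx]
  norm_num

theorem rpow_one_div_six_pow_six {x : ℝ} (hx : 0 ≤ x) : (x ^ ((1 : ℝ) / 6)) ^ 6 = x := by
  rw [← rpow_natCast, ← rpow_mul hx]
  norm_num

/-- The AMISE criterion A(h_U,h_Z) = c₁/(h_U h_Z) + c₂(a h_U⁴ + 2b h_U² h_Z² + d h_Z⁴)
over h_U, h_Z > 0 (c₁, c₂, a, d > 0, b > −√(ad)) is minimized at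
h_U* = (c₁ d^{3/4}/(4 c₂ (√(ad)+b) a^{3/4}))^{1/6} and h_Z* = (a/d)^{1/4} h_U*,
and the minimizer satisfies h_Z*/h_U* = (a/d)^{1/4}. -/
theorem stmt3 (c₁ c₂ a b d : ℝ) (hc₁ : 0 < c₁) (hc₂ : 0 < c₂) (ha : 0 < a) (hd : 0 < d)
    (hb : -Real.sqrt (a * d) < b) :
    let A : ℝ → ℝ → ℝ := fun hU hZ =>
      c₁ / (hU * hZ) + c₂ * (a * hU ^ 4 + 2 * b * hU ^ 2 * hZ ^ 2 + d * hZ ^ 4)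
    let hUstar : ℝ :=
      (c₁ * d ^ ((3 : ℝ) / 4) / (4 * c₂ * (Real.sqrt (a * d) + b) * a ^ ((3 : ℝ) / 4)))
        ^ ((1 : ℝ) / 6)
    let hZstar : ℝ := (a / d) ^ ((1 : ℝ) / 4) * hUstar
    (∀ hU hZ : ℝ, 0 < hU → 0 < hZ → A hUstar hZstar ≤ A hU hZ) ∧
      hZstar / hUstar = (a / d) ^ ((1 : ℝ) / 4) := by
  intro A u z
  have hs : 0 < √(a * d) + b := by linarith
  have hbase : 0 < c₁ * d ^ ((3 : ℝ) / 4) / (4 * c₂ * (√(a * d) + b) * a ^ ((3 : ℝ) / 4)) :=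
    div_pos (by positivity) (mul_pos (mul_pos (by positivity) hs) (by positivity))
  have hu : 0 < u := rpow_pos_of_pos hbase _
  have hz : 0 < z := mul_pos (rpow_pos_of_pos (div_pos ha hd) _) hu
  have hbalanced : √a * u ^ 2 = √d * z ^ 2 := by
    rw [mul_pow, ← mul_assoc, sqrt_mul_rpow_one_div_four_sq ha.le hd]
  have hc₁_eq : c₁ = 4 * c₂ * (√(a * d) + b) * (u * z) ^ 3 := by
    rw [show (u * z) ^ 3 = ((a / d) ^ ((1 : ℝ) / 4)) ^ 3 * u ^ 6 by ring,
      rpow_one_div_four_pow_three (div_pos ha hd).le, div_rpow ha.le hd.le,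
      rpow_one_div_six_pow_six hbase.le]
    field_simp
  refine ⟨fun x y hx hy => amise_le_of_balanced hc₂.le ha.le hd.le hs.le hu hz hx hy
    hbalanced hc₁_eq, mul_div_cancel_right₀ _ hu.ne'⟩
end

section
/- With sparse-optimal bandwidths h_U ≍ h_Z ≍ (nm)^{−1/6} and m ≍ n^θ, the relation n^{−1} h_Z^{−1} = o((nm)^{−1} h_U^{−1} h_Z^{−1}) (i.e. the functional-specific variance term V^{II} is of smaller order than V^{I}) holds if and only if 0 ≤ θ < 1/5. -/
/-!
The ratio of the two variance terms is `m h_U`. Writing `m ≍ n^θ` and `h_U ≍ (n m)^{-1/6}`,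
it behaves like `n^θ · n^{-(1+θ)/6} = n^{(5θ-1)/6}` up to a positive constant, so it tends to
zero exactly when the exponent `(5θ-1)/6` is negative.
-/

open Filter Topology Asymptotics

lemma Filter.Tendsto.tendsto_rpow_nhds_zero_iff {α : Type*} {l : Filter α} [l.NeBot]
    {f : α → ℝ} (hf : Tendsto f l atTop) {c : ℝ} :
    Tendsto (fun x => f x ^ c) l (𝓝 0) ↔ c < 0 := by
  refine ⟨fun h => ?_, fun hc => ?_⟩
  · by_contra! hc
    have h_one_le : ∀ᶠ x in l, 1 ≤ f x ^ c :=
      (hf.eventually_ge_atTop 1).mono fun x hx => Real.one_le_rpow hx hc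
    linarith [ge_of_tendsto h h_one_le]
  · simpa [Function.comp_def] using (tendsto_rpow_neg_atTop (neg_pos.mpr hc)).comp hf

lemma inv_mul_inv_div_inv_mul_inv_mul_inv {N z : ℝ} (hN : N ≠ 0) (hz : z ≠ 0) (m h : ℝ) :
    (N⁻¹ * z⁻¹) / ((N * m)⁻¹ * h⁻¹ * z⁻¹) = m * h := by
  rw [div_eq_mul_inv]
  simp only [mul_inv, inv_inv]
  field_simp

lemma mul_div_rpow_eq {N m : ℝ} (hN : 0 < N) (hm : 0 < m) (θ q h : ℝ) :
    m * h / N ^ (θ * (1 + q) + q) = (m / N ^ θ) ^ (1 + q) * (h / (N * m) ^ q) := by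
  rw [Real.div_rpow hm.le (by positivity), Real.mul_rpow hN.le hm.le, ← Real.rpow_mul hN.le,
    Real.rpow_add hN, Real.rpow_add hm, Real.rpow_one]
  field_simp

lemma isTheta_natCast_rpow_mul {θ q Lm Lh : ℝ} {m h : ℕ → ℝ} (hLm : 0 < Lm) (hLh : Lh ≠ 0)
    (hm : Tendsto (fun n => m n / (n : ℝ) ^ θ) atTop (𝓝 Lm))
    (hh : Tendsto (fun n => h n / ((n : ℝ) * m n) ^ q) atTop (𝓝 Lh)) :
    (fun n : ℕ => (n : ℝ) ^ (θ * (1 + q) + q)) =Θ[atTop] fun n => m n * h n := by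
  refine isTheta_of_div_tendsto_nhds_ne_zero (c := Lm ^ (1 + q) * Lh) ?_
    (mul_ne_zero (Real.rpow_pos_of_pos hLm _).ne' hLh)
  refine ((hm.rpow_const (Or.inl hLm.ne')).mul hh).congr' ?_
  filter_upwards [hm.eventually (lt_mem_nhds hLm), eventually_gt_atTop 0] with n hmn hn
  have hN : (0 : ℝ) < n := Nat.cast_pos.mpr hn
  have hmn : 0 < m n := (div_pos_iff_of_pos_right (Real.rpow_pos_of_pos hN θ)).mp hmn
  exact (mul_div_rpow_eq hN hmn θ q (h n)).symm

theorem stmt7_general (θ : ℝ)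
    (m hU hZ : ℕ → ℝ)
    (hm : ∃ L : ℝ, 0 < L ∧ Tendsto (fun n => m n / (n : ℝ) ^ θ) atTop (𝓝 L))
    (hhU : ∃ L : ℝ, 0 < L ∧
      Tendsto (fun n => hU n / ((n : ℝ) * m n) ^ (-(1 : ℝ) / 6)) atTop (𝓝 L))
    (hhZ : ∃ L : ℝ, 0 < L ∧
      Tendsto (fun n => hZ n / ((n : ℝ) * m n) ^ (-(1 : ℝ) / 6)) atTop (𝓝 L)) :
    Tendsto (fun (n : ℕ) => ((n : ℝ)⁻¹ * (hZ n)⁻¹) / (((n : ℝ) * m n)⁻¹ * (hU n)⁻¹ * (hZ n)⁻¹))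
        atTop (𝓝 0) ↔ θ < 1 / 5 := by
  obtain ⟨Lm, hLm, hm⟩ := hm
  obtain ⟨LU, hLU, hU_rate⟩ := hhU
  obtain ⟨LZ, hLZ, hZ_rate⟩ := hhZ
  have hZ_ne : ∀ᶠ n in atTop, hZ n ≠ 0 :=
    (hZ_rate.eventually_ne hLZ.ne').mono fun _ h => left_ne_zero_of_mul h
  have h_ratio : (fun n : ℕ =>
      ((n : ℝ)⁻¹ * (hZ n)⁻¹) / (((n : ℝ) * m n)⁻¹ * (hU n)⁻¹ * (hZ n)⁻¹))
        =ᶠ[atTop] fun n => m n * hU n := by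
    filter_upwards [hZ_ne, eventually_ne_atTop 0] with n hz hn
    exact inv_mul_inv_div_inv_mul_inv_mul_inv (Nat.cast_ne_zero.mpr hn) hz _ _
  rw [tendsto_congr' h_ratio,
    (isTheta_natCast_rpow_mul hLm hLU.ne' hm hU_rate).symm.tendsto_zero_iff,
    tendsto_natCast_atTop_atTop.tendsto_rpow_nhds_zero_iff]
  constructor <;> intro h <;> linarith

/-- With sparse-optimal bandwidths h_U ≍ h_Z ≍ (nm)^{−1/6} and m ≍ n^θ (θ ≥ 0),
the relation n⁻¹h_Z⁻¹ = o((nm)⁻¹h_U⁻¹h_Z⁻¹) holds if and only if θ < 1/5. -/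
theorem stmt7 (θ : ℝ) (hθ : 0 ≤ θ)
    (m hU hZ : ℕ → ℝ) (hmpos : ∀ n, 0 < m n)
    (hUpos : ∀ n, 0 < hU n) (hZpos : ∀ n, 0 < hZ n)
    (hm : ∃ L : ℝ, 0 < L ∧ Tendsto (fun n => m n / (n : ℝ) ^ θ) atTop (𝓝 L))
    (hhU : ∃ L : ℝ, 0 < L ∧
      Tendsto (fun n => hU n / ((n : ℝ) * m n) ^ (-(1 : ℝ) / 6)) atTop (𝓝 L))
    (hhZ : ∃ L : ℝ, 0 < L ∧
      Tendsto (fun n => hZ n / ((n : ℝ) * m n) ^ (-(1 : ℝ) / 6)) atTop (𝓝 L)) :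
    Tendsto (fun (n : ℕ) => ((n : ℝ)⁻¹ * (hZ n)⁻¹) / (((n : ℝ) * m n)⁻¹ * (hU n)⁻¹ * (hZ n)⁻¹))
        atTop (𝓝 0) ↔ θ < 1 / 5 :=
  stmt7_general θ m hU hZ hm hhU hhZ
end
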